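/- Let U_s : ℝ⁺ → ℝ be three times continuously differentiable with U_s'(a) = 0 for some a > 0, let τ ∈ ℂ, and let V : ℝ\{0} → ℂ be three times continuously differentiable on each half-line and satisfy (τ + U_s''(a) z²/2) V'(z) − U_s''(a) z V(z) + i V'''(z) = 0 for z ≠ 0, with jumps [V] = −τ, [V'] = 0, [V''] = −U_s''(a) at z = 0. For ε ∈ (0,1] define w_ε := −U_s(a) + ε^{1/2} τ, v^{reg}_ε(y) := H(y−a)[U_s(y) − U_s(a) + ε^{1/2} τ], v^{sl}_ε(y) := ε^{1/2} V((y−a)/ε^{1/4}), and v_ε := v^{reg}_ε + v^{sl}_ε, where H is the Heaviside function. Then: (1) v_ε, v_ε' and v_ε'' have no jump across y = a (so v_ε extends to a C² function on ℝ⁺); (2) the pair (u^{app}, v^{app})(t,x,y) := e^{iε^{-1}(x + w_ε t)}( i v_ε'(y), ε^{-1} v_ε(y) ) satisfies ∂_x u^{app} + ∂_y v^{app} = 0; and (3) for all y ∈ ℝ⁺ with y ≠ a, ∂_t u^{app} + U_s ∂_x u^{app} + v^{app} U_s' − ∂_y² u^{app} = e^{iε^{-1}(x + w_ε t)} R^{app}_ε(y),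 where R^{app}_ε(y) = −ε^{-1}[U_s(y) − U_s(a) − U_s''(a)(y−a)²/2] (v^{sl}_ε)'(y) + ε^{-1}[U_s'(y) − U_s''(a)(y−a)] v^{sl}_ε(y) − i (v^{reg}_ε)'''(y). -/

import Mathlib

open Set Filter

/-!
STATEMENT 5: the frozen-coefficient approximate solution built from the regular
part and the shear-layer part: no jumps of v_ε, v_ε', v_ε'' across y = a,
divergence-free, and explicit remainder R^{app}_ε away from y = a.
-/

/-- Regular part `v^{reg}_ε(y) = H(y−a)[U_s(y) − U_s(a) + ε^{1/2}τ]`. -/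
noncomputable def vregF (Us : ℝ → ℝ) (a : ℝ) (τ : ℂ) (ε y : ℝ) : ℂ :=
  (if 0 < y - a then (1:ℂ) else 0) *
    (((Us y - Us a : ℝ) : ℂ) + ((ε ^ ((1:ℝ)/2) : ℝ) : ℂ) * τ)

/-- Shear-layer part `v^{sl}_ε(y) = ε^{1/2} V((y−a)/ε^{1/4})`. -/
noncomputable def vslF (V : ℝ → ℂ) (a : ℝ) (ε y : ℝ) : ℂ :=
  ((ε ^ ((1:ℝ)/2) : ℝ) : ℂ) * V ((y - a) / ε ^ ((1:ℝ)/4))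

/-- `v_ε = v^{reg}_ε + v^{sl}_ε`. -/
noncomputable def vepsF (Us : ℝ → ℝ) (V : ℝ → ℂ) (a : ℝ) (τ : ℂ) (ε y : ℝ) : ℂ :=
  vregF Us a τ ε y + vslF V a ε y

/-- Oscillatory phase `e^{iε⁻¹(x + w_ε t)}` with `w_ε = −U_s(a) + ε^{1/2}τ`. -/
noncomputable def phaseF (Us : ℝ → ℝ) (a : ℝ) (τ : ℂ) (ε t x : ℝ) : ℂ :=
  Complex.exp (Complex.I * ((ε⁻¹ : ℝ) : ℂ) *
    ((x : ℂ) + ((-(Us a) : ℝ) + ((ε ^ ((1:ℝ)/2) : ℝ) : ℂ) * τ) * (t : ℂ)))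

/-- Approximate tangential velocity `u^{app} = e^{iε⁻¹(x+w_ε t)} i v_ε'(y)`. -/
noncomputable def uappF (Us : ℝ → ℝ) (V : ℝ → ℂ) (a : ℝ) (τ : ℂ) (ε t x y : ℝ) : ℂ :=
  phaseF Us a τ ε t x * (Complex.I * deriv (vepsF Us V a τ ε) y)

/-- Approximate normal velocity `v^{app} = e^{iε⁻¹(x+w_ε t)} ε⁻¹ v_ε(y)`. -/
noncomputable def vappF (Us : ℝ → ℝ) (V : ℝ → ℂ) (a : ℝ) (τ : ℂ) (ε t x y : ℝ) : ℂ :=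
  phaseF Us a τ ε t x * (((ε⁻¹ : ℝ) : ℂ) * vepsF Us V a τ ε y)

/-- The remainder profile `R^{app}_ε`. -/
noncomputable def RappF (Us : ℝ → ℝ) (V : ℝ → ℂ) (a : ℝ) (τ : ℂ) (ε y : ℝ) : ℂ :=
  -((ε⁻¹ : ℝ) : ℂ) *
      ((Us y - Us a - iteratedDeriv 2 Us a * (y - a) ^ 2 / 2 : ℝ) : ℂ) *
      deriv (vslF V a ε) y
  + ((ε⁻¹ : ℝ) : ℂ) *
      ((deriv Us y - iteratedDeriv 2 Us a * (y - a) : ℝ) : ℂ) * vslF V a ε y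
  - Complex.I * iteratedDeriv 3 (vregF Us a τ ε) y

/-!
Away from `y = a` everything is explicit: `v^{reg}_ε` is `H(y − a)` times a smooth function and
`v^{sl}_ε` is a rescaling of `V`, so `v_ε^{(k)}(y) = H(y − a) U_s^{(k)}(y) + ε^{(2−k)/4} V^{(k)}(z)`
with `z = (y − a)/ε^{1/4}`. At `y = a` the one-sided limits of these differ by
`ε^{1/2}([V] + τ)`, `ε^{1/4}[V'] + U_s'(a)` and `[V''] + U_s''(a)`, which all vanish; a function
whose first two derivatives off a point extend continuously across it is `C²` there.
The phase `e^{iε⁻¹(x + w_ε t)}` turns `∂_x` into `iε⁻¹`, which gives the divergence identity and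
reduces the linearized operator to `−ε⁻¹(U_s(y) − U_s(a) + ε^{1/2}τ) v_ε' + ε⁻¹ U_s' v_ε − i v_ε'''`.
There the `H` terms cancel, and the ODE for `V` rescaled to `z` says that `v^{sl}_ε` solves
`(ε^{1/2}τ + U_s''(a)(y − a)²/2) v' − U_s''(a)(y − a) v + iε v''' = 0`; subtracting this
leaves `R^{app}_ε`.
-/

open Topology

section IteratedDeriv

variable {𝕜 : Type*} [NontriviallyNormedField 𝕜] {E : Type*} [NormedAddCommGroup E]
  [NormedSpace 𝕜 E]

theorem iteratedDeriv_eqOn_of_hasDerivAt {D : ℕ → 𝕜 → E} {s : Set 𝕜} (hs : IsOpen s) {n : ℕ}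
    (hD : ∀ k < n, ∀ t ∈ s, HasDerivAt (D k) (D (k + 1) t) t) :
    ∀ k ≤ n, EqOn (iteratedDeriv k (D 0)) (D k) s := by
  intro k
  induction k with
  | zero => intro _ t _; simp
  | succ k ih =>
    intro hk t ht
    have hloc : iteratedDeriv k (D 0) =ᶠ[𝓝 t] D k :=
      eventually_of_mem (hs.mem_nhds ht) (ih (by omega))
    rw [iteratedDeriv_succ, hloc.deriv_eq]
    exact (hD k (by omega) t ht).deriv

theorem hasDerivAt_iteratedDeriv_of_contDiffOn {f : 𝕜 → E} {s : Set 𝕜} {n : ℕ}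
    (hs : IsOpen s) (hf : ContDiffOn 𝕜 n f s) {k : ℕ} (hk : k < n) {t : 𝕜} (ht : t ∈ s) :
    HasDerivAt (iteratedDeriv k f) (iteratedDeriv (k + 1) f t) t := by
  have hdiff : DifferentiableOn 𝕜 (iteratedDeriv k f) s :=
    (hf.differentiableOn_iteratedDerivWithin (by exact_mod_cast hk) hs.uniqueDiffOn).congr
      (iteratedDerivWithin_of_isOpen hs).symm
  rw [iteratedDeriv_succ]
  exact (hdiff.differentiableAt (hs.mem_nhds ht)).hasDerivAt

end IteratedDeriv

theorem exists_contDiff_eq_of_tendsto_nhdsNE {E : Type*} [NormedAddCommGroup E]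
    [NormedSpace ℝ E] {D : ℕ → ℝ → E} {a : ℝ} {n : ℕ}
    (hD : ∀ k < n, ∀ t ≠ a, HasDerivAt (D k) (D (k + 1) t) t)
    (hcont : ∀ t ≠ a, ContinuousAt (D n) t)
    (hlim : ∀ k ≤ n, ∃ L, Tendsto (D k) (𝓝[≠] a) (𝓝 L)) :
    ∃ g : ℝ → E, ContDiff ℝ n g ∧ ∀ t ≠ a, g t = D 0 t := by
  classical
  choose! L hL using hlim
  set g : ℕ → ℝ → E := fun k => Function.update (D k) a (L k)
  have hg_ne : ∀ k, ∀ t ≠ a, g k =ᶠ[𝓝 t] D k := fun k t ht =>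
    eventually_of_mem (isOpen_compl_singleton.mem_nhds ht) fun u hu =>
      Function.update_of_ne hu _ _
  have hg_a : ∀ k ≤ n, ContinuousAt (g k) a := fun k hk =>
    continuousAt_update_same.2 (hL k hk)
  have hg_deriv_ne : ∀ k < n, ∀ t ≠ a, HasDerivAt (g k) (g (k + 1) t) t := fun k hk t ht => by
    rw [(hg_ne (k + 1) t ht).eq_of_nhds]
    exact (hD k hk t ht).congr_of_eventuallyEq (hg_ne k t ht)
  have hg_deriv : ∀ k < n, ∀ t, HasDerivAt (g k) (g (k + 1) t) t := by
    intro k hk t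
    rcases eq_or_ne t a with rfl | ht
    · exact hasDerivAt_of_hasDerivAt_of_ne (hg_deriv_ne k hk) (hg_a k hk.le) (hg_a (k + 1) hk)
    · exact hg_deriv_ne k hk t ht
  have hiter : ∀ k ≤ n, iteratedDeriv k (g 0) = g k := fun k hk =>
    funext fun t => iteratedDeriv_eqOn_of_hasDerivAt isOpen_univ
      (fun k hk t _ => hg_deriv k hk t) k hk (mem_univ t)
  have hg_cont : ∀ k ≤ n, Continuous (g k) := by
    intro k hk
    rcases hk.lt_or_eq with hk | rfl
    · exact continuous_iff_continuousAt.2 fun t => (hg_deriv k hk t).continuousAt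
    refine continuous_iff_continuousAt.2 fun t => ?_
    rcases eq_or_ne t a with rfl | ht
    · exact hg_a k le_rfl
    · exact (hcont t ht).congr (hg_ne k t ht).symm
  refine ⟨g 0, contDiff_iff_iteratedDeriv.2 ⟨fun k hk => ?_, fun k hk => ?_⟩,
    fun t ht => Function.update_of_ne ht _ _⟩
  · rw [hiter k (by exact_mod_cast hk)]
    exact hg_cont k (by exact_mod_cast hk)
  · rw [hiter k (by exact_mod_cast hk.le)]
    exact fun t => (hg_deriv k (by exact_mod_cast hk) t).differentiableAt

theorem hasDerivAt_heaviside_mul {g : ℝ → ℂ} {g' : ℂ} {a y : ℝ} (hy : y ≠ a)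
    (hg : a < y → HasDerivAt g g' y) :
    HasDerivAt (fun t => (if 0 < t - a then (1 : ℂ) else 0) * g t)
      ((if 0 < y - a then 1 else 0) * g') y := by
  rcases hy.lt_or_gt with hlt | hgt
  · have hzero : (fun t => (if 0 < t - a then (1 : ℂ) else 0) * g t) =ᶠ[𝓝 y] fun _ => 0 := by
      filter_upwards [Iio_mem_nhds hlt] with t ht
      simp [sub_pos, not_lt.2 (mem_Iio.1 ht).le]
    simpa [sub_pos, not_lt.2 hlt.le] using
      (hasDerivAt_const y (0 : ℂ)).congr_of_eventuallyEq hzero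
  · have heq : (fun t => (if 0 < t - a then (1 : ℂ) else 0) * g t) =ᶠ[𝓝 y] g := by
      filter_upwards [Ioi_mem_nhds hgt] with t ht
      simp [sub_pos.2 (mem_Ioi.1 ht)]
    simpa [sub_pos.2 hgt] using (hg hgt).congr_of_eventuallyEq heq

noncomputable def offsetDeriv (U : ℝ → ℝ) (a : ℝ) (c : ℂ) : ℕ → ℝ → ℂ
  | 0 => fun y => ((U y - U a : ℝ) : ℂ) + c
  | k + 1 => fun y => ((iteratedDeriv (k + 1) U y : ℝ) : ℂ)

noncomputable def regDeriv (U : ℝ → ℝ) (a : ℝ) (c : ℂ) (k : ℕ) (y : ℝ) : ℂ :=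
  (if 0 < y - a then (1 : ℂ) else 0) * offsetDeriv U a c k y

section Regular

variable {U : ℝ → ℝ} {a : ℝ} {c : ℂ} {s : Set ℝ} {n : ℕ}

theorem hasDerivAt_offsetDeriv (hs : IsOpen s) (hU : ContDiffOn ℝ n U s) {k : ℕ} (hk : k < n)
    {y : ℝ} (hy : y ∈ s) :
    HasDerivAt (offsetDeriv U a c k) (offsetDeriv U a c (k + 1) y) y := by
  have h := (hasDerivAt_iteratedDeriv_of_contDiffOn hs hU hk hy).ofReal_comp
  cases k with
  | zero =>
    have h0 :
        offsetDeriv U a c 0 = fun t => ((iteratedDeriv 0 U t : ℝ) : ℂ) - (U a : ℂ) + c := by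
      funext t
      simp [offsetDeriv]
    rw [h0]
    exact (h.sub_const _).add_const c
  | succ k => exact h

theorem hasDerivAt_regDeriv (hs : IsOpen s) (has : Ici a ⊆ s) (hU : ContDiffOn ℝ n U s) :
    ∀ k < n, ∀ y ≠ a, HasDerivAt (regDeriv U a c k) (regDeriv U a c (k + 1) y) y :=
  fun _ hk _ hy => hasDerivAt_heaviside_mul hy fun hay =>
    hasDerivAt_offsetDeriv hs hU hk (has (mem_Ici.2 hay.le))

theorem regDeriv_eventuallyEq_zero_nhdsLT (k : ℕ) : regDeriv U a c k =ᶠ[𝓝[<] a] 0 := by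
  filter_upwards [self_mem_nhdsWithin] with y hy
  simp [regDeriv, sub_pos, not_lt.2 (le_of_lt (mem_Iio.1 hy))]

theorem tendsto_regDeriv_nhdsGT (hs : IsOpen s) (has : Ici a ⊆ s) (hU : ContDiffOn ℝ n U s)
    {k : ℕ} (hk : k < n) :
    Tendsto (regDeriv U a c k) (𝓝[>] a) (𝓝 (offsetDeriv U a c k a)) := by
  have hcont : ContinuousAt (offsetDeriv U a c k) a :=
    (hasDerivAt_offsetDeriv hs hU hk (has self_mem_Ici)).continuousAt
  refine (hcont.tendsto.mono_left nhdsWithin_le_nhds).congr' ?_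
  filter_upwards [self_mem_nhdsWithin] with y hy
  simp [regDeriv, sub_pos.2 (mem_Ioi.1 hy)]

end Regular

-- The `k`-th derivative of `y ↦ r² W((y − a)/r)`; for `r = ε^{1/4}` this is `v^{sl}_ε`.
noncomputable def layerDeriv (W : ℝ → ℂ) (a r : ℝ) (k : ℕ) (y : ℝ) : ℂ :=
  ((r ^ (2 - k : ℤ) : ℝ) : ℂ) * iteratedDeriv k W ((y - a) / r)

section Layer

variable {W : ℝ → ℂ} {a r : ℝ}

theorem hasDerivAt_layerDeriv {n : ℕ} (hr : r ≠ 0) (hW : ContDiffOn ℝ n W {0}ᶜ) :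
    ∀ k < n, ∀ y ≠ a, HasDerivAt (layerDeriv W a r k) (layerDeriv W a r (k + 1) y) y := by
  intro k hk y hy
  have hz : (y - a) / r ∈ ({0}ᶜ : Set ℝ) := div_ne_zero (sub_ne_zero.2 hy) hr
  have hinner : HasDerivAt (fun t : ℝ => (t - a) / r) r⁻¹ y := by
    simpa [div_eq_mul_inv] using ((hasDerivAt_id y).sub_const a).div_const r
  have hcomp := ((hasDerivAt_iteratedDeriv_of_contDiffOn isOpen_compl_singleton hW hk hz).scomp
    y hinner).const_mul ((r ^ (2 - k : ℤ) : ℝ) : ℂ)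
  refine hcomp.congr_deriv ?_
  rw [layerDeriv, Complex.real_smul, ← mul_assoc, ← Complex.ofReal_mul, ← zpow_sub_one₀ hr]
  push_cast
  ring_nf

theorem tendsto_sub_div_nhdsGT (hr : 0 < r) :
    Tendsto (fun y => (y - a) / r) (𝓝[>] a) (𝓝[>] 0) := by
  simpa using ((continuous_sub_right a).div_const r).continuousWithinAt.tendsto_nhdsWithin
    (x := a) (s := Ioi a) (t := Ioi 0) fun y (hy : a < y) => div_pos (sub_pos.2 hy) hr

theorem tendsto_sub_div_nhdsLT (hr : 0 < r) :
    Tendsto (fun y => (y - a) / r) (𝓝[<] a) (𝓝[<] 0) := by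
  simpa using ((continuous_sub_right a).div_const r).continuousWithinAt.tendsto_nhdsWithin
    (x := a) (s := Iio a) (t := Iio 0) fun y (hy : y < a) => div_neg_of_neg_of_pos (sub_neg.2 hy) hr

theorem tendsto_layerDeriv_nhdsGT (hr : 0 < r) {k : ℕ} {L : ℂ}
    (hL : Tendsto (iteratedDeriv k W) (𝓝[>] 0) (𝓝 L)) :
    Tendsto (layerDeriv W a r k) (𝓝[>] a) (𝓝 (((r ^ (2 - k : ℤ) : ℝ) : ℂ) * L)) :=
  tendsto_const_nhds.mul (hL.comp (tendsto_sub_div_nhdsGT hr))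

theorem tendsto_layerDeriv_nhdsLT (hr : 0 < r) {k : ℕ} {L : ℂ}
    (hL : Tendsto (iteratedDeriv k W) (𝓝[<] 0) (𝓝 L)) :
    Tendsto (layerDeriv W a r k) (𝓝[<] a) (𝓝 (((r ^ (2 - k : ℤ) : ℝ) : ℂ) * L)) :=
  tendsto_const_nhds.mul (hL.comp (tendsto_sub_div_nhdsLT hr))

theorem layerDeriv_ode {τ : ℂ} {b : ℝ} (hr : r ≠ 0)
    (hW : ∀ z : ℝ, z ≠ 0 →
      (τ + ((b * z ^ 2 / 2 : ℝ) : ℂ)) * deriv W z - ((b * z : ℝ) : ℂ) * W z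
        + Complex.I * iteratedDeriv 3 W z = 0)
    {y : ℝ} (hy : y ≠ a) :
    (((r ^ 2 : ℝ) : ℂ) * τ + ((b * (y - a) ^ 2 / 2 : ℝ) : ℂ)) * layerDeriv W a r 1 y
      - ((b * (y - a) : ℝ) : ℂ) * layerDeriv W a r 0 y
      + Complex.I * ((r ^ 4 : ℝ) : ℂ) * layerDeriv W a r 3 y = 0 := by
  set z := (y - a) / r with hz_def
  have hya : y - a = r * z := by rw [hz_def]; field_simp
  have hode := hW z (div_ne_zero (sub_ne_zero.2 hy) hr)
  simp only [layerDeriv, hya, iteratedDeriv_zero, iteratedDeriv_one]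
  norm_num
  field_simp
  push_cast at hode ⊢
  linear_combination 2 * (r : ℂ) ^ 3 * hode

end Layer

theorem tendsto_regDeriv_add_layerDeriv_nhdsNE {U : ℝ → ℝ} {W : ℝ → ℂ} {a r : ℝ} {c : ℂ}
    {k : ℕ} {ρ Lp Lm : ℂ} (hr : 0 < r)
    (hreg : Tendsto (regDeriv U a c k) (𝓝[>] a) (𝓝 ρ))
    (hp : Tendsto (iteratedDeriv k W) (𝓝[>] 0) (𝓝 Lp))
    (hm : Tendsto (iteratedDeriv k W) (𝓝[<] 0) (𝓝 Lm))
    (hjump : ρ + ((r ^ (2 - k : ℤ) : ℝ) : ℂ) * Lp = ((r ^ (2 - k : ℤ) : ℝ) : ℂ) * Lm) :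
    Tendsto (regDeriv U a c k + layerDeriv W a r k) (𝓝[≠] a)
      (𝓝 (((r ^ (2 - k : ℤ) : ℝ) : ℂ) * Lm)) := by
  rw [← nhdsLT_sup_nhdsGT, tendsto_sup]
  constructor
  · have hzero : Tendsto (regDeriv U a c k) (𝓝[<] a) (𝓝 0) :=
      tendsto_const_nhds.congr' (regDeriv_eventuallyEq_zero_nhdsLT k).symm
    have hsum := hzero.add (tendsto_layerDeriv_nhdsLT hr hm)
    rwa [zero_add] at hsum
  · exact hjump ▸ hreg.add (tendsto_layerDeriv_nhdsGT hr hp)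

theorem rpow_quarter_sq {ε : ℝ} (hε : 0 ≤ ε) : (ε ^ ((1 : ℝ) / 4)) ^ 2 = ε ^ ((1 : ℝ) / 2) := by
  rw [← Real.rpow_natCast, ← Real.rpow_mul hε]
  norm_num

theorem rpow_quarter_pow_four {ε : ℝ} (hε : 0 ≤ ε) : (ε ^ ((1 : ℝ) / 4)) ^ 4 = ε := by
  rw [← Real.rpow_natCast, ← Real.rpow_mul hε]
  norm_num

noncomputable def vepsDeriv (Us : ℝ → ℝ) (V : ℝ → ℂ) (a : ℝ) (τ : ℂ) (ε : ℝ) (k : ℕ) :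
    ℝ → ℂ :=
  regDeriv Us a (((ε ^ ((1 : ℝ) / 2) : ℝ) : ℂ) * τ) k + layerDeriv V a (ε ^ ((1 : ℝ) / 4)) k

section ApproximateSolution

variable {Us : ℝ → ℝ} {V : ℝ → ℂ} {a : ℝ} {τ : ℂ} {ε : ℝ}

theorem vregF_eq_regDeriv :
    vregF Us a τ ε = regDeriv Us a (((ε ^ ((1 : ℝ) / 2) : ℝ) : ℂ) * τ) 0 :=
  rfl

theorem vslF_eq_layerDeriv (hε : 0 ≤ ε) : vslF V a ε = layerDeriv V a (ε ^ ((1 : ℝ) / 4)) 0 := by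
  funext y
  rw [vslF, layerDeriv, iteratedDeriv_zero, Nat.cast_zero, sub_zero, zpow_ofNat,
    rpow_quarter_sq hε]

theorem vepsF_eq_vepsDeriv (hε : 0 ≤ ε) : vepsF Us V a τ ε = vepsDeriv Us V a τ ε 0 := by
  funext y
  rw [vepsDeriv, Pi.add_apply, ← vregF_eq_regDeriv, ← vslF_eq_layerDeriv hε]
  rfl

theorem hasDerivAt_regDeriv_of_contDiffOn_Ioi (hUs : ContDiffOn ℝ 3 Us (Ioi 0)) (ha : 0 < a)
    {c : ℂ} :
    ∀ k < 3, ∀ y ≠ a, HasDerivAt (regDeriv Us a c k) (regDeriv Us a c (k + 1) y) y :=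
  hasDerivAt_regDeriv isOpen_Ioi (Ici_subset_Ioi.2 ha) (n := 3) hUs

theorem hasDerivAt_layerDeriv_of_contDiffOn_Iio_Ioi
    (hV : ContDiffOn ℝ 3 V (Iio 0) ∧ ContDiffOn ℝ 3 V (Ioi 0)) {r : ℝ} (hr : r ≠ 0) :
    ∀ k < 3, ∀ y ≠ a, HasDerivAt (layerDeriv V a r k) (layerDeriv V a r (k + 1) y) y :=
  hasDerivAt_layerDeriv (n := 3) hr
    (Iio_union_Ioi (a := (0 : ℝ)) ▸ hV.1.union_of_isOpen hV.2 isOpen_Iio isOpen_Ioi)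

theorem hasDerivAt_vepsDeriv (hUs : ContDiffOn ℝ 3 Us (Ioi 0)) (ha : 0 < a)
    (hV : ContDiffOn ℝ 3 V (Iio 0) ∧ ContDiffOn ℝ 3 V (Ioi 0)) (hε : 0 < ε) :
    ∀ k < 3, ∀ y ≠ a,
      HasDerivAt (vepsDeriv Us V a τ ε k) (vepsDeriv Us V a τ ε (k + 1) y) y :=
  fun k hk y hy => (hasDerivAt_regDeriv_of_contDiffOn_Ioi hUs ha k hk y hy).add
    (hasDerivAt_layerDeriv_of_contDiffOn_Iio_Ioi hV (Real.rpow_pos_of_pos hε _).ne' k hk y hy)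

theorem iteratedDeriv_vepsF_eqOn (hUs : ContDiffOn ℝ 3 Us (Ioi 0)) (ha : 0 < a)
    (hV : ContDiffOn ℝ 3 V (Iio 0) ∧ ContDiffOn ℝ 3 V (Ioi 0)) (hε : 0 < ε) :
    ∀ k ≤ 3, EqOn (iteratedDeriv k (vepsF Us V a τ ε)) (vepsDeriv Us V a τ ε k) {a}ᶜ := by
  rw [vepsF_eq_vepsDeriv hε.le]
  exact iteratedDeriv_eqOn_of_hasDerivAt isOpen_compl_singleton (hasDerivAt_vepsDeriv hUs ha hV hε)

theorem exists_tendsto_vepsDeriv (hUs : ContDiffOn ℝ 3 Us (Ioi 0)) (ha : 0 < a)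
    (hcrit : deriv Us a = 0) {Vp0 Vm0 Vp1 Vm1 Vp2 Vm2 : ℂ}
    (hl0 : Tendsto V (𝓝[>] 0) (𝓝 Vp0)) (hl0' : Tendsto V (𝓝[<] 0) (𝓝 Vm0))
    (hj0 : Vp0 - Vm0 = -τ)
    (hl1 : Tendsto (deriv V) (𝓝[>] 0) (𝓝 Vp1)) (hl1' : Tendsto (deriv V) (𝓝[<] 0) (𝓝 Vm1))
    (hj1 : Vp1 - Vm1 = 0)
    (hl2 : Tendsto (iteratedDeriv 2 V) (𝓝[>] 0) (𝓝 Vp2))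
    (hl2' : Tendsto (iteratedDeriv 2 V) (𝓝[<] 0) (𝓝 Vm2))
    (hj2 : Vp2 - Vm2 = -((iteratedDeriv 2 Us a : ℝ) : ℂ)) (hε : 0 < ε) :
    ∀ k ≤ 2, ∃ L, Tendsto (vepsDeriv Us V a τ ε k) (𝓝[≠] a) (𝓝 L) := by
  have hr : 0 < ε ^ ((1 : ℝ) / 4) := Real.rpow_pos_of_pos hε _
  have hreg : ∀ k < 3, Tendsto (regDeriv Us a (((ε ^ ((1 : ℝ) / 2) : ℝ) : ℂ) * τ) k) (𝓝[>] a)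
      (𝓝 (offsetDeriv Us a (((ε ^ ((1 : ℝ) / 2) : ℝ) : ℂ) * τ) k a)) := fun k hk =>
    tendsto_regDeriv_nhdsGT isOpen_Ioi (Ici_subset_Ioi.2 ha) (n := 3) hUs hk
  intro k hk
  interval_cases k
  · refine ⟨_, tendsto_regDeriv_add_layerDeriv_nhdsNE hr (hreg 0 (by norm_num))
      (by simpa using hl0) (by simpa using hl0') ?_⟩
    simp only [offsetDeriv, sub_self, Complex.ofReal_zero, zero_add, Nat.cast_zero, sub_zero,
      zpow_ofNat, rpow_quarter_sq hε.le]
    linear_combination ((ε ^ ((1 : ℝ) / 2) : ℝ) : ℂ) * hj0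
  · refine ⟨_, tendsto_regDeriv_add_layerDeriv_nhdsNE hr (hreg 1 (by norm_num))
      (by simpa using hl1) (by simpa using hl1') ?_⟩
    simp only [offsetDeriv, iteratedDeriv_one, hcrit, Complex.ofReal_zero, zero_add]
    linear_combination (((ε ^ ((1 : ℝ) / 4)) ^ (2 - ((1 : ℕ) : ℤ)) : ℝ) : ℂ) * hj1
  · refine ⟨_, tendsto_regDeriv_add_layerDeriv_nhdsNE hr (hreg 2 (by norm_num)) hl2 hl2' ?_⟩
    simp only [offsetDeriv, Nat.cast_ofNat, sub_self, zpow_zero, Complex.ofReal_one, one_mul]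
    linear_combination hj2

theorem vepsF_no_jump_of_tendsto (hUs : ContDiffOn ℝ 3 Us (Ioi 0)) (ha : 0 < a)
    (hV : ContDiffOn ℝ 3 V (Iio 0) ∧ ContDiffOn ℝ 3 V (Ioi 0)) (hε : 0 < ε)
    (hlim : ∀ k ≤ 2, ∃ L, Tendsto (vepsDeriv Us V a τ ε k) (𝓝[≠] a) (𝓝 L)) :
    (∃ L0 : ℂ, Tendsto (vepsF Us V a τ ε) (𝓝[≠] a) (𝓝 L0)) ∧
    (∃ L1 : ℂ, Tendsto (deriv (vepsF Us V a τ ε)) (𝓝[≠] a) (𝓝 L1)) ∧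
    (∃ L2 : ℂ, Tendsto (iteratedDeriv 2 (vepsF Us V a τ ε)) (𝓝[≠] a) (𝓝 L2)) ∧
    (∃ g : ℝ → ℂ, ContDiffOn ℝ 2 g (Ioi 0) ∧
      ∀ y ∈ Ioi (0 : ℝ), y ≠ a → g y = vepsF Us V a τ ε y) := by
  have hD := hasDerivAt_vepsDeriv (τ := τ) hUs ha hV hε
  have hiter : ∀ k ≤ 2, ∃ L, Tendsto (iteratedDeriv k (vepsF Us V a τ ε)) (𝓝[≠] a) (𝓝 L) :=
    fun k hk => (hlim k hk).imp fun _ hL => hL.congr'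
      ((iteratedDeriv_vepsF_eqOn hUs ha hV hε k (by omega)).eventuallyEq_nhdsWithin.symm)
  obtain ⟨g, hg, hg_eq⟩ := exists_contDiff_eq_of_tendsto_nhdsNE (n := 2)
    (fun k hk => hD k (by omega)) (fun y hy => (hD 2 (by norm_num) y hy).continuousAt) hlim
  refine ⟨by simpa using hiter 0 (by norm_num), by simpa using hiter 1 (by norm_num),
    hiter 2 le_rfl, g, hg.contDiffOn, fun y _ hy => ?_⟩
  rw [hg_eq y hy, vepsF_eq_vepsDeriv hε.le]

theorem hasDerivAt_phaseF_x (t x : ℝ) :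
    HasDerivAt (fun x' => phaseF Us a τ ε t x')
      (Complex.I * ((ε⁻¹ : ℝ) : ℂ) * phaseF Us a τ ε t x) x := by
  have hlin := (((hasDerivAt_id x).ofReal_comp.add_const
    ((((-(Us a) : ℝ) : ℂ) + ((ε ^ ((1 : ℝ) / 2) : ℝ) : ℂ) * τ) * (t : ℂ))).const_mul
    (Complex.I * ((ε⁻¹ : ℝ) : ℂ)))
  refine hlin.cexp.congr_deriv ?_
  simp only [phaseF, id, Complex.ofReal_one, mul_one]
  ring

theorem hasDerivAt_phaseF_t (t x : ℝ) :
    HasDerivAt (fun t' => phaseF Us a τ ε t' x)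
      (Complex.I * ((ε⁻¹ : ℝ) : ℂ) * (((-(Us a) : ℝ) : ℂ) + ((ε ^ ((1 : ℝ) / 2) : ℝ) : ℂ) * τ)
        * phaseF Us a τ ε t x) t := by
  have hlin := (((hasDerivAt_id t).ofReal_comp.const_mul
    (((-(Us a) : ℝ) : ℂ) + ((ε ^ ((1 : ℝ) / 2) : ℝ) : ℂ) * τ)).const_add (x : ℂ)).const_mul
    (Complex.I * ((ε⁻¹ : ℝ) : ℂ))
  refine hlin.cexp.congr_deriv ?_
  simp only [phaseF, id, Complex.ofReal_one, mul_one]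
  ring

theorem hasDerivAt_uappF_x (t x y : ℝ) :
    HasDerivAt (fun x' => uappF Us V a τ ε t x' y)
      (Complex.I * ((ε⁻¹ : ℝ) : ℂ) * phaseF Us a τ ε t x
        * (Complex.I * deriv (vepsF Us V a τ ε) y)) x :=
  (hasDerivAt_phaseF_x t x).mul_const _

theorem hasDerivAt_uappF_t (t x y : ℝ) :
    HasDerivAt (fun t' => uappF Us V a τ ε t' x y)
      (Complex.I * ((ε⁻¹ : ℝ) : ℂ) * (((-(Us a) : ℝ) : ℂ) + ((ε ^ ((1 : ℝ) / 2) : ℝ) : ℂ) * τ)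
        * phaseF Us a τ ε t x * (Complex.I * deriv (vepsF Us V a τ ε) y)) t :=
  (hasDerivAt_phaseF_t t x).mul_const _

theorem iteratedDeriv_two_uappF (t x y : ℝ) :
    iteratedDeriv 2 (fun y' => uappF Us V a τ ε t x y') y
      = phaseF Us a τ ε t x * (Complex.I * iteratedDeriv 3 (vepsF Us V a τ ε) y) := by
  simp only [uappF, iteratedDeriv_const_mul_field, ← iteratedDeriv_succ']

theorem deriv_vappF (t x y : ℝ) :
    deriv (fun y' => vappF Us V a τ ε t x y') y
      = phaseF Us a τ ε t x * (((ε⁻¹ : ℝ) : ℂ) * deriv (vepsF Us V a τ ε) y) := by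
  simp only [vappF, deriv_const_mul_field']

theorem uappF_vappF_div_free (t x y : ℝ) :
    deriv (fun x' => uappF Us V a τ ε t x' y) x
      + deriv (fun y' => vappF Us V a τ ε t x y') y = 0 := by
  rw [(hasDerivAt_uappF_x t x y).deriv, deriv_vappF]
  linear_combination (phaseF Us a τ ε t x * ((ε⁻¹ : ℝ) : ℂ) * deriv (vepsF Us V a τ ε) y)
    * Complex.I_mul_I

theorem vepsF_profile_eq_RappF (hUs : ContDiffOn ℝ 3 Us (Ioi 0)) (ha : 0 < a)
    (hV : ContDiffOn ℝ 3 V (Iio 0) ∧ ContDiffOn ℝ 3 V (Ioi 0))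
    (hODE : ∀ z : ℝ, z ≠ 0 →
      (τ + ((iteratedDeriv 2 Us a * z ^ 2 / 2 : ℝ) : ℂ)) * deriv V z
        - ((iteratedDeriv 2 Us a * z : ℝ) : ℂ) * V z
        + Complex.I * iteratedDeriv 3 V z = 0)
    (hε : 0 < ε) {y : ℝ} (hy : y ≠ a) :
    -((ε⁻¹ : ℝ) : ℂ) * (((Us y - Us a : ℝ) : ℂ) + ((ε ^ ((1 : ℝ) / 2) : ℝ) : ℂ) * τ)
        * deriv (vepsF Us V a τ ε) y
      + ((ε⁻¹ : ℝ) : ℂ) * ((deriv Us y : ℝ) : ℂ) * vepsF Us V a τ ε y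
      - Complex.I * iteratedDeriv 3 (vepsF Us V a τ ε) y
    = RappF Us V a τ ε y := by
  have hr : 0 < ε ^ ((1 : ℝ) / 4) := Real.rpow_pos_of_pos hε _
  have hreg3 : iteratedDeriv 3 (vregF Us a τ ε) y
      = regDeriv Us a (((ε ^ ((1 : ℝ) / 2) : ℝ) : ℂ) * τ) 3 y :=
    iteratedDeriv_eqOn_of_hasDerivAt isOpen_compl_singleton
      (hasDerivAt_regDeriv_of_contDiffOn_Ioi hUs ha) 3 le_rfl hy
  have hsl1 : deriv (vslF V a ε) y = layerDeriv V a (ε ^ ((1 : ℝ) / 4)) 1 y := by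
    rw [vslF_eq_layerDeriv hε.le, ← iteratedDeriv_one]
    exact iteratedDeriv_eqOn_of_hasDerivAt isOpen_compl_singleton
      (hasDerivAt_layerDeriv_of_contDiffOn_Iio_Ioi hV hr.ne') 1 (by norm_num) hy
  have hveps := iteratedDeriv_vepsF_eqOn (τ := τ) hUs ha hV hε
  have hode := layerDeriv_ode (a := a) (b := iteratedDeriv 2 Us a) hr.ne' hODE hy
  have hinv : ((ε⁻¹ : ℝ) : ℂ) * (((ε ^ ((1 : ℝ) / 4)) ^ 4 : ℝ) : ℂ) = 1 := by
    rw [← Complex.ofReal_mul, rpow_quarter_pow_four hε.le, inv_mul_cancel₀ hε.ne',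
      Complex.ofReal_one]
  rw [← iteratedDeriv_one, hveps 1 (by norm_num) hy, hveps 3 le_rfl hy, RappF, hsl1, hreg3,
    vslF_eq_layerDeriv hε.le, vepsF_eq_vepsDeriv hε.le]
  simp only [vepsDeriv, Pi.add_apply, regDeriv, offsetDeriv, ← rpow_quarter_sq hε.le]
  push_cast [iteratedDeriv_one] at hode hinv ⊢
  -- the `H(y − a)` terms cancel; what is left is `−ε⁻¹` times the rescaled ODE
  linear_combination (-((ε : ℂ))⁻¹) * hode
    + Complex.I * layerDeriv V a (ε ^ ((1 : ℝ) / 4)) 3 y * hinv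

theorem linearizedPrandtl_uappF_vappF_eq (hUs : ContDiffOn ℝ 3 Us (Ioi 0)) (ha : 0 < a)
    (hV : ContDiffOn ℝ 3 V (Iio 0) ∧ ContDiffOn ℝ 3 V (Ioi 0))
    (hODE : ∀ z : ℝ, z ≠ 0 →
      (τ + ((iteratedDeriv 2 Us a * z ^ 2 / 2 : ℝ) : ℂ)) * deriv V z
        - ((iteratedDeriv 2 Us a * z : ℝ) : ℂ) * V z
        + Complex.I * iteratedDeriv 3 V z = 0)
    (hε : 0 < ε) (t x : ℝ) {y : ℝ} (hy : y ≠ a) :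
    deriv (fun t' => uappF Us V a τ ε t' x y) t
        + (Us y : ℂ) * deriv (fun x' => uappF Us V a τ ε t x' y) x
        + vappF Us V a τ ε t x y * ((deriv Us y : ℝ) : ℂ)
        - iteratedDeriv 2 (fun y' => uappF Us V a τ ε t x y') y
      = phaseF Us a τ ε t x * RappF Us V a τ ε y := by
  rw [(hasDerivAt_uappF_t t x y).deriv, (hasDerivAt_uappF_x t x y).deriv,
    iteratedDeriv_two_uappF, ← vepsF_profile_eq_RappF hUs ha hV hODE hε hy, vappF]
  push_cast
  linear_combination ((ε : ℂ))⁻¹ * phaseF Us a τ ε t x * deriv (vepsF Us V a τ ε) y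
    * ((Us y : ℂ) - (Us a : ℂ) + ((ε ^ ((1 : ℝ) / 2) : ℝ) : ℂ) * τ) * Complex.I_mul_I

end ApproximateSolution

theorem frozen_coefficient_approximation
    (Us : ℝ → ℝ) (hUs : ContDiffOn ℝ 3 Us (Ioi 0))
    (a : ℝ) (ha : 0 < a) (hcrit : deriv Us a = 0)
    (τ : ℂ) (V : ℝ → ℂ)
    (hV : ContDiffOn ℝ 3 V (Iio 0) ∧ ContDiffOn ℝ 3 V (Ioi 0))
    (hODE : ∀ z : ℝ, z ≠ 0 →
      (τ + ((iteratedDeriv 2 Us a * z ^ 2 / 2 : ℝ) : ℂ)) * deriv V z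
        - ((iteratedDeriv 2 Us a * z : ℝ) : ℂ) * V z
        + Complex.I * iteratedDeriv 3 V z = 0)
    (Vp0 Vm0 Vp1 Vm1 Vp2 Vm2 : ℂ)
    (hl0 : Tendsto V (nhdsWithin 0 (Ioi 0)) (nhds Vp0))
    (hl0' : Tendsto V (nhdsWithin 0 (Iio 0)) (nhds Vm0))
    (hj0 : Vp0 - Vm0 = -τ)
    (hl1 : Tendsto (deriv V) (nhdsWithin 0 (Ioi 0)) (nhds Vp1))
    (hl1' : Tendsto (deriv V) (nhdsWithin 0 (Iio 0)) (nhds Vm1))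
    (hj1 : Vp1 - Vm1 = 0)
    (hl2 : Tendsto (iteratedDeriv 2 V) (nhdsWithin 0 (Ioi 0)) (nhds Vp2))
    (hl2' : Tendsto (iteratedDeriv 2 V) (nhdsWithin 0 (Iio 0)) (nhds Vm2))
    (hj2 : Vp2 - Vm2 = -((iteratedDeriv 2 Us a : ℝ) : ℂ))
    (ε : ℝ) (hε : ε ∈ Ioc (0:ℝ) 1) :
    -- (1) v_ε, v_ε', v_ε'' have no jump across y = a, and v_ε extends to a C²
    --     function on ℝ⁺
    ((∃ L0 : ℂ, Tendsto (vepsF Us V a τ ε) (nhdsWithin a {a}ᶜ) (nhds L0)) ∧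
     (∃ L1 : ℂ, Tendsto (deriv (vepsF Us V a τ ε)) (nhdsWithin a {a}ᶜ) (nhds L1)) ∧
     (∃ L2 : ℂ, Tendsto (iteratedDeriv 2 (vepsF Us V a τ ε)) (nhdsWithin a {a}ᶜ) (nhds L2)) ∧
     (∃ g : ℝ → ℂ, ContDiffOn ℝ 2 g (Ioi 0) ∧
        ∀ y ∈ Ioi (0:ℝ), y ≠ a → g y = vepsF Us V a τ ε y)) ∧
    -- (2) divergence free
    (∀ t x : ℝ, ∀ y > (0:ℝ),
      deriv (fun x' => uappF Us V a τ ε t x' y) x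
        + deriv (fun y' => vappF Us V a τ ε t x y') y = 0) ∧
    -- (3) remainder identity for y ≠ a
    (∀ t x : ℝ, ∀ y > (0:ℝ), y ≠ a →
      deriv (fun t' => uappF Us V a τ ε t' x y) t
        + (Us y : ℂ) * deriv (fun x' => uappF Us V a τ ε t x' y) x
        + vappF Us V a τ ε t x y * ((deriv Us y : ℝ) : ℂ)
        - iteratedDeriv 2 (fun y' => uappF Us V a τ ε t x y') y
      = phaseF Us a τ ε t x * RappF Us V a τ ε y) := by
  obtain ⟨hε0, -⟩ := hε
  exact ⟨vepsF_no_jump_of_tendsto hUs ha hV hε0 (exists_tendsto_vepsDeriv hUs ha hcrit hl0 hl0' hj0 hl1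
      hl1' hj1 hl2 hl2' hj2 hε0),
    fun t x y _ => uappF_vappF_div_free t x y,
    fun t x y _ hy => linearizedPrandtl_uappF_vappF_eq hUs ha hV hODE hε0 t x hy⟩
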